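/- Let L be an additive commutative group, let β ∈ L, and let f : L → ℤ be an additive group homomorphism with f(β) = 2. Define s : L → L by s(ω) = ω − f(ω)·β, and let m : L → ℂ be a finitely supported function satisfying m(s(ω)) = m(ω) for all ω ∈ L. Then, in the group algebra ℂ[L], the element Σ_{ω ∈ supp(m)} m(ω)·f(ω)·e^{ω} is divisible by 1 − e^{−β}. -/

import Mathlib

/-!
The reflection `s ω = ω - f ω • β` is an involution of `L` that preserves `m` and negates `f`,
so it sends `T = ∑ m ω f ω e^ω` to `-T`. Hence `2 T = ∑ m ω f ω (e^ω - e^{s ω})`, and each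
`e^ω - e^{ω - n β}` is divisible by `1 - e^{-β}` by telescoping. Dividing by `2` finishes.
-/

open AddMonoidAlgebra

section
variable {k L : Type*} [CommRing k] [AddCommGroup L]

lemma one_sub_single_neg_mul_single (β a : L) (c : k) :
    (1 - single (-β) 1) * single a c = single a c - single (a - β) c := by
  rw [sub_mul, one_mul, single_mul_single, one_mul, neg_add_eq_sub]

lemma one_sub_single_neg_dvd_single_sub_single_sub_zsmul (β a : L) (c : k) (n : ℤ) :
    (1 - single (-β) (1 : k)) ∣ single a c - single (a - n • β) c := by
  induction n using Int.induction_on with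
  | zero => simp
  | succ n ih =>
    have step := Dvd.intro _ (one_sub_single_neg_mul_single β (a - (n : ℤ) • β) c)
    convert dvd_add ih step using 1
    rw [add_smul, one_smul, sub_add_sub_cancel, sub_sub]
  | pred n ih =>
    have step := Dvd.intro _ (one_sub_single_neg_mul_single β (a - (-n - 1 : ℤ) • β) c)
    rw [show a - (-n - 1 : ℤ) • β - β = a - (-n : ℤ) • β by rw [sub_smul, one_smul]; abel]
      at step
    convert dvd_sub ih step using 1
    abel

variable {β : L} {f : L →+ ℤ}

lemma map_sub_zsmul_self (hf : f β = 2) (ω : L) : f (ω - f ω • β) = -f ω := by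
  rw [map_sub, map_zsmul, hf, smul_eq_mul]
  ring

lemma sub_zsmul_self_involutive (hf : f β = 2) : Function.Involutive fun ω ↦ ω - f ω • β := by
  intro ω
  simp only [map_sub_zsmul_self hf, neg_smul, sub_neg_eq_add, sub_add_cancel]

lemma sum_single_sub_zsmul_self (hf : f β = 2) (m : L →₀ k)
    (hm : ∀ ω : L, m (ω - f ω • β) = m ω) :
    ∑ ω ∈ m.support, single (ω - f ω • β) (m ω * f ω) =
      -∑ ω ∈ m.support, single ω (m ω * f ω) := by
  have hs := sub_zsmul_self_involutive hf
  have mem_support : ∀ ω ∈ m.support, ω - f ω • β ∈ m.support := fun ω hω ↦ by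
    rw [Finsupp.mem_support_iff, hm]
    exact Finsupp.mem_support_iff.1 hω
  rw [← Finset.sum_neg_distrib]
  refine Finset.sum_nbij' _ _ mem_support mem_support (fun ω _ ↦ hs ω) (fun ω _ ↦ hs ω) ?_
  intro ω _
  rw [hm, map_sub_zsmul_self hf, Int.cast_neg, mul_neg, single_neg, neg_neg]

theorem one_sub_single_neg_dvd_two_smul_sum (hf : f β = 2) (m : L →₀ k)
    (hm : ∀ ω : L, m (ω - f ω • β) = m ω) :
    (1 - single (-β) (1 : k)) ∣ 2 • ∑ ω ∈ m.support, single ω (m ω * f ω) := by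
  rw [two_smul, ← sub_neg_eq_add, ← sum_single_sub_zsmul_self hf m hm,
    ← Finset.sum_sub_distrib]
  exact Finset.dvd_sum fun ω _ ↦ one_sub_single_neg_dvd_single_sub_single_sub_zsmul _ _ _ _

end

theorem stmt0 (L : Type*) [AddCommGroup L] (β : L) (f : L →+ ℤ) (hf : f β = 2)
    (m : L →₀ ℂ) (hm : ∀ ω : L, m (ω - f ω • β) = m ω) :
    (1 - AddMonoidAlgebra.single (-β) (1 : ℂ)) ∣
      (∑ ω ∈ m.support, AddMonoidAlgebra.single ω (m ω * (f ω : ℂ)) :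
        AddMonoidAlgebra ℂ L) := by
  set T : AddMonoidAlgebra ℂ L := ∑ ω ∈ m.support, single ω (m ω * f ω)
  have h2T : (1 - single (-β) (1 : ℂ)) ∣ 2 • T := one_sub_single_neg_dvd_two_smul_sum hf m hm
  have hT : T = (2⁻¹ : ℂ) • 2 • T := by
    rw [← Nat.cast_smul_eq_nsmul ℂ, smul_smul]
    norm_num
  rw [hT, Algebra.smul_def]
  exact h2T.mul_left _
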